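/- If y and z are conditionally independent given x under q, and p(x,y|z) = p(y|z)·p(x|y,z), then the ELBO decomposes as log p(x,y) ≥ −D_KL(q(z|x) ‖ p(z)) + E_{q(z|x)}[log p(x|y,z)] + E_{q(z|x)}[log p(y|z)]. -/

import Mathlib

/-!
Write `p(x,y) = ∑_z q(z|x) · p(z) p(y|z) p(x|y,z) / q(z|x)`. By Jensen's inequality for the concave
logarithm, `log p(x,y)` dominates the `q(z|x)`-average of `log (p(z) p(y|z) p(x|y,z) / q(z|x))`, and
splitting that logarithm termwise gives the three terms of the bound.
-/

open Finset Real

theorem sum_mul_log_div_le_log_sum {ι : Type*} (s : Finset ι) (w P : ι → ℝ)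
    (hw : ∀ i ∈ s, 0 < w i) (hP : ∀ i ∈ s, 0 < P i) (hws : ∑ i ∈ s, w i = 1) :
    ∑ i ∈ s, w i * log (P i / w i) ≤ log (∑ i ∈ s, P i) := by
  have jensen := strictConcaveOn_log_Ioi.concaveOn.le_map_sum (t := s) (p := fun i => P i / w i)
    (fun i hi => (hw i hi).le) hws (fun i hi => div_pos (hP i hi) (hw i hi))
  have hcancel : ∑ i ∈ s, w i * (P i / w i) = ∑ i ∈ s, P i :=
    sum_congr rfl fun i hi => mul_div_cancel₀ _ (hw i hi).ne'
  simpa only [smul_eq_mul, hcancel] using jensen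

theorem elbo_decomposed_bound_general
    {γ : Type*} [Fintype γ]
    (pz py_z px_yz qzx : γ → ℝ)
    (hpz : ∀ z, 0 < pz z) (hpy : ∀ z, 0 < py_z z) (hpx : ∀ z, 0 < px_yz z)
    (hq : ∀ z, 0 < qzx z)
    (hqs : ∑ z, qzx z = 1) :
    let pxy : ℝ := ∑ z, pz z * (py_z z * px_yz z)   -- p(x,y|z) = p(y|z)·p(x|y,z)
    Real.log pxy
      ≥ -(∑ z, qzx z * Real.log (qzx z / pz z))
        + (∑ z, qzx z * Real.log (px_yz z))
        + (∑ z, qzx z * Real.log (py_z z)) := by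
  have hsplit : ∀ z, qzx z * log (pz z * (py_z z * px_yz z) / qzx z)
      = -(qzx z * log (qzx z / pz z)) + qzx z * log (px_yz z) + qzx z * log (py_z z) := by
    intro z
    have hp := hpz z
    have hy := hpy z
    have hx := hpx z
    have hqz := hq z
    rw [log_div (by positivity) hqz.ne', log_mul hp.ne' (by positivity), log_mul hy.ne' hx.ne',
      log_div hqz.ne' hp.ne']
    ring
  have jensen := sum_mul_log_div_le_log_sum univ qzx (fun z => pz z * (py_z z * px_yz z))
    (fun z _ => hq z) (fun z _ => mul_pos (hpz z) (mul_pos (hpy z) (hpx z))) hqs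
  simpa only [hsplit, sum_add_distrib, sum_neg_distrib] using jensen

/-- Decomposed ELBO: if `q(z|x,y) = q(z|x)` (conditional independence of `y` and `z`
given `x` under `q`) and `p(x,y|z) = p(y|z)·p(x|y,z)`, then
`log p(x,y) ≥ −D_KL(q(z|x)‖p(z)) + E_{q(z|x)}[log p(x|y,z)] + E_{q(z|x)}[log p(y|z)]`. -/
theorem elbo_decomposed_bound
    {γ : Type*} [Fintype γ] [Nonempty γ]
    (pz py_z px_yz qzx qzxy : γ → ℝ)
    (hpz : ∀ z, 0 < pz z) (hpy : ∀ z, 0 < py_z z) (hpx : ∀ z, 0 < px_yz z)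
    (hq : ∀ z, 0 < qzx z)
    (hpzs : ∑ z, pz z = 1) (hqs : ∑ z, qzx z = 1)
    (hci : qzxy = qzx) :    -- conditional independence: q(z|x,y) = q(z|x)
    let pxy : ℝ := ∑ z, pz z * (py_z z * px_yz z)   -- p(x,y|z) = p(y|z)·p(x|y,z)
    Real.log pxy
      ≥ -(∑ z, qzx z * Real.log (qzx z / pz z))
        + (∑ z, qzx z * Real.log (px_yz z))
        + (∑ z, qzx z * Real.log (py_z z)) :=
  elbo_decomposed_bound_general pz py_z px_yz qzx hpz hpy hpx hq hqs
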